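/- For n odd, the multiset of f-values of odd words of rank n+1 equals the multiset union of the f-values of odd words of rank n and (n+1) times those f-values; i.e., {f_w : w odd of rank n+1} = {f_v : v odd of rank n} ⊔ {(n+1)·f_v : v odd of rank n} as multisets. -/

import Mathlib

/-! An odd word of odd rank `n` begins with `1`: a leading `2` would contribute the even factor
`n - 1` to `fprod`. So the odd words of rank `n + 1` are exactly `1v` and `2v'` for the odd words
`v = 1v'` of rank `n`, and their `fprod` values are `fprod v` and `n * fprod v`. -/

/-- The list of words covered by `w` in the Young-Fibonacci lattice. -/
def preds : List ℕ → List (List ℕ)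
  | [] => []
  | 1 :: t => [t]
  | 2 :: t => (1 :: t) :: (preds t).map (fun u => 2 :: u)
  | _ :: _ => []

theorem preds_sum_lt : ∀ (w u : List ℕ), u ∈ preds w → u.sum < w.sum := by
  intro w
  induction w using preds.induct with
  | case1 => intro u h; simp [preds] at h
  | case2 t => intro u h; simp [preds] at h; subst h; simp
  | case3 t ih =>
      intro u h
      simp [preds] at h
      rcases h with h | ⟨v, hv, rfl⟩
      · subst h; simp
      · have := ih v hv; simpa using by omega
  | case4 x t h1 h2 => intro u h; simp [preds] at h

/-- The number of saturated chains from the empty word to `w`. -/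
def f (w : List ℕ) : ℕ :=
  if w = [] then 1
  else ((preds w).attach.map (fun u => f u.1)).sum
termination_by w.sum
decreasing_by exact preds_sum_lt w u.1 u.2

/-- The product formula. -/
def fprod (w : List ℕ) : ℕ :=
  ∏ i ∈ Finset.univ.filter (fun i : Fin w.length => w.get i = 2), ((w.drop i.1).sum - 1)

def IsOddWord (n : ℕ) (w : List ℕ) : Prop :=
  (∀ x ∈ w, x = 1 ∨ x = 2) ∧ w.sum = n ∧ Odd (fprod w)

lemma fprod_cons (a : ℕ) (t : List ℕ) :
    fprod (a :: t) = (if a = 2 then (a :: t).sum - 1 else 1) * fprod t := by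
  unfold fprod
  rw [Finset.prod_filter, Finset.prod_filter]
  simp only [List.length_cons]
  rw [Fin.prod_univ_succ]
  simp

lemma fprod_one_cons (t : List ℕ) : fprod (1 :: t) = fprod t := by
  simp [fprod_cons]

lemma fprod_two_cons (t : List ℕ) : fprod (2 :: t) = (t.sum + 1) * fprod t := by
  rw [fprod_cons, if_pos rfl, List.sum_cons]
  congr 1
  omega

namespace IsOddWord

variable {n : ℕ} {t w : List ℕ}

lemma one_cons_iff : IsOddWord (n + 1) (1 :: t) ↔ IsOddWord n t := by
  simp only [IsOddWord, List.forall_mem_cons, List.sum_cons, fprod_one_cons]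
  grind

lemma two_cons_iff (hn : Odd n) : IsOddWord (n + 1) (2 :: t) ↔ IsOddWord n (1 :: t) := by
  simp only [IsOddWord, List.forall_mem_cons, List.sum_cons, fprod_two_cons, fprod_one_cons,
    Nat.odd_mul]
  constructor
  · rintro ⟨⟨-, ht⟩, hsum, -, hodd⟩
    exact ⟨⟨by simp, ht⟩, by omega, hodd⟩
  · rintro ⟨⟨-, ht⟩, hsum, hodd⟩
    exact ⟨⟨by simp, ht⟩, by omega, by rwa [add_comm, hsum], hodd⟩

lemma eq_one_cons (hn : Odd n) (hw : IsOddWord n w) : ∃ t, w = 1 :: t := by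
  obtain ⟨hletters, hsum, hodd⟩ := hw
  obtain ⟨k, rfl⟩ := hn
  rcases w with _ | ⟨a, t⟩
  · simp at hsum
  obtain rfl | rfl := hletters a List.mem_cons_self
  · exact ⟨t, rfl⟩
  · have ht : t.sum + 1 = 2 * k := by simp at hsum; omega
    rw [fprod_two_cons, ht, Nat.odd_mul] at hodd
    exact absurd hodd.1 (by simp)

lemma succ_iff (hn : Odd n) :
    IsOddWord (n + 1) w ↔
      (∃ v, IsOddWord n v ∧ 1 :: v = w) ∨ ∃ v, IsOddWord n v ∧ 2 :: v.tail = w := by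
  constructor
  · intro hw
    rcases w with _ | ⟨a, t⟩
    · simp [IsOddWord] at hw
    obtain rfl | rfl := hw.1 a List.mem_cons_self
    · exact Or.inl ⟨t, one_cons_iff.1 hw, rfl⟩
    · exact Or.inr ⟨1 :: t, (two_cons_iff hn).1 hw, rfl⟩
  · rintro (⟨v, hv, rfl⟩ | ⟨v, hv, rfl⟩)
    · exact one_cons_iff.2 hv
    · obtain ⟨t, rfl⟩ := hv.eq_one_cons hn
      exact (two_cons_iff hn).2 hv

end IsOddWord

lemma nodup_map_cons_one_add_map_two_cons_tail {s : Multiset (List ℕ)} (hs : s.Nodup)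
    (hhead : ∀ v ∈ s, ∃ t, v = 1 :: t) :
    (s.map (List.cons 1) + s.map (fun v => 2 :: v.tail)).Nodup := by
  refine Multiset.nodup_add.2 ⟨hs.map List.cons_injective, hs.map_on ?_, ?_⟩
  · intro v hv u hu h
    obtain ⟨t, rfl⟩ := hhead v hv
    obtain ⟨t', rfl⟩ := hhead u hu
    simpa using h
  · refine Multiset.disjoint_left.2 fun hw hw' => ?_
    obtain ⟨v, -, rfl⟩ := Multiset.mem_map.1 hw
    obtain ⟨u, -, hu⟩ := Multiset.mem_map.1 hw'
    simp at hu

/-- for `n` odd, the multiset of `f`-values of odd words of rank `n+1`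
is the union of the `f`-values of the odd words of rank `n` and `n` times those
values. -/
theorem fvalues_step_odd (n : ℕ) (hn : Odd n) (L L' : Finset (List ℕ))
    (hL : ∀ w : List ℕ, w ∈ L ↔ (∀ x ∈ w, x = 1 ∨ x = 2) ∧ w.sum = n ∧ Odd (fprod w))
    (hL' : ∀ w : List ℕ, w ∈ L' ↔ (∀ x ∈ w, x = 1 ∨ x = 2) ∧ w.sum = n + 1 ∧ Odd (fprod w)) :
    L'.val.map fprod = L.val.map fprod + L.val.map (fun v => n * fprod v) := by
  replace hL : ∀ w, w ∈ L ↔ IsOddWord n w := hL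
  replace hL' : ∀ w, w ∈ L' ↔ IsOddWord (n + 1) w := hL'
  have hhead : ∀ v ∈ L, ∃ t, v = 1 :: t := fun v hv => ((hL v).1 hv).eq_one_cons hn
  have hcovers : L'.val = L.val.map (List.cons 1) + L.val.map (fun v => 2 :: v.tail) := by
    refine (Multiset.Nodup.ext L'.nodup
      (nodup_map_cons_one_add_map_two_cons_tail L.nodup hhead)).2 fun w => ?_
    rw [Finset.mem_val, hL', IsOddWord.succ_iff hn]
    simp only [Multiset.mem_add, Multiset.mem_map, Finset.mem_val, hL]
  rw [hcovers, Multiset.map_add, Multiset.map_map, Multiset.map_map]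
  congr 1
  · exact Multiset.map_congr rfl fun v _ => fprod_one_cons v
  · refine Multiset.map_congr rfl fun v hv => ?_
    obtain ⟨hsum, -⟩ := ((hL v).1 hv).2
    obtain ⟨t, rfl⟩ := hhead v hv
    simp only [Function.comp_apply, List.tail_cons, fprod_two_cons, fprod_one_cons]
    simp only [List.sum_cons] at hsum
    rw [← hsum, add_comm]
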